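/- Let c be an introduce node of the nice tree decomposition T with child b and B(c) = B(b) ∪ {v}, v ∉ B(b), and let f ∈ P(Q). Suppose there are a positive integer M such that M·f(K) is an integer for every K ∈ ℛ(c), and binary vectors I_1,…,I_M ∈ {0,1}^(ℛ(b)), each satisfying the constraints relevant to T(b), with f|_b = (1/M) Σ_i I_i. Then there exist binary vectors J_1,…,J_M ∈ {0,1}^(ℛ(c)), each satisfying the constraints relevant to T(c), such that f|_c = (1/M) Σ_i J_i. -/

import Mathlib

/-! Common definitions: CSP instances, configurations, nice tree decompositions,
and the polytopes from Kolman–Koutecký. -/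

/-- A constraint with scope `scope`; its satisfaction depends only on the
coordinates in the scope (it is a relation on the domains of the scope). -/
structure CSPConstraint (n : ℕ) where
  scope : Finset (Fin n)
  sat : (Fin n → ℝ) → Prop
  sat_congr : ∀ z z' : Fin n → ℝ, (∀ v ∈ scope, z v = z' v) → sat z → sat z'

/-- A CSP instance: finite real domains, hard constraints and soft constraints. -/
structure CSPInstance (n : ℕ) where
  dom : Fin n → Finset ℝ
  hard : List (CSPConstraint n)
  soft : List (CSPConstraint n)

variable {n : ℕ}

/-- The list of all constraints (hard and soft). -/
def consList (Q : CSPInstance n) : List (CSPConstraint n) := Q.hard ++ Q.soft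

/-- A feasible assignment: values in the domains, satisfying all hard constraints. -/
def Feasible (Q : CSPInstance n) (z : Fin n → ℝ) : Prop :=
  (∀ v, z v ∈ Q.dom v) ∧ ∀ C ∈ Q.hard, C.sat z

-- Configurations of a set `W` of variables: partial assignments (with `none`
-- playing the role of the symbol `λ`) defined exactly on `W`.
open Classical in
noncomputable def configs (Q : CSPInstance n) (W : Finset (Fin n)) :
    Finset (Fin n → Option ℝ) :=
  (Fintype.piFinset fun v =>
      if v ∈ W then (Q.dom v).image some else ({none} : Finset (Option ℝ))).filter
    (fun K => ∀ C ∈ Q.hard, C.scope ⊆ W → C.sat (fun v => (K v).getD 0))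

/-- Restriction `K↾_W` of a configuration: coordinates outside `W` are set to `λ`. -/
def restrictCfg (K : Fin n → Option ℝ) (W : Finset (Fin n)) : Fin n → Option ℝ :=
  fun v => if v ∈ W then K v else none

/-- A (rooted) nice tree: leaves, introduce nodes, forget nodes and join nodes. -/
inductive NiceTree (n : ℕ) : Type
  | leaf (v : Fin n) : NiceTree n
  | introduce (v : Fin n) (t : NiceTree n) : NiceTree n
  | forget (v : Fin n) (t : NiceTree n) : NiceTree n
  | join (t₁ t₂ : NiceTree n) : NiceTree n

namespace NiceTree

/-- The bag of the root node of a nice tree. -/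
def bag : NiceTree n → Finset (Fin n)
  | leaf v => {v}
  | introduce v t => insert v (bag t)
  | forget v t => (bag t).erase v
  | join t₁ _ => bag t₁

/-- All vertices appearing in bags of the tree. -/
def verts : NiceTree n → Finset (Fin n)
  | leaf v => {v}
  | introduce v t => insert v (verts t)
  | forget _ t => verts t
  | join t₁ t₂ => verts t₁ ∪ verts t₂

/-- Number of nodes of the tree. -/
def size : NiceTree n → ℕ
  | leaf _ => 1
  | introduce _ t => size t + 1
  | forget _ t => size t + 1
  | join t₁ t₂ => size t₁ + size t₂ + 1

/-- Structural validity of a nice tree (in particular, the connectivity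
condition of tree decompositions: an introduced vertex does not occur below,
and vertices shared by the two subtrees of a join lie in its bag). -/
def valid : NiceTree n → Prop
  | leaf _ => True
  | introduce v t => v ∉ verts t ∧ valid t
  | forget v t => v ∈ bag t ∧ valid t
  | join t₁ t₂ => bag t₁ = bag t₂ ∧ verts t₁ ∩ verts t₂ ⊆ bag t₁ ∧ valid t₁ ∧ valid t₂

/-- `isSubtree s t`: `s` is a node (subtree) of `t`. -/
def isSubtree (s : NiceTree n) : NiceTree n → Prop
  | leaf v => s = leaf v
  | introduce v t => s = introduce v t ∨ isSubtree s t
  | forget v t => s = forget v t ∨ isSubtree s t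
  | join t₁ t₂ => s = join t₁ t₂ ∨ isSubtree s t₁ ∨ isSubtree s t₂

-- The configurations relevant to the subtree: `ℛ(a) = ⋃_{b ∈ T(a)} 𝒦(B(b))`.
open Classical in
noncomputable def relConfigs (Q : CSPInstance n) : NiceTree n → Finset (Fin n → Option ℝ)
  | leaf v => configs Q {v}
  | introduce v t => configs Q (insert v (bag t)) ∪ relConfigs Q t
  | forget v t => configs Q ((bag t).erase v) ∪ relConfigs Q t
  | join t₁ t₂ => relConfigs Q t₁ ∪ relConfigs Q t₂

end NiceTree

/-- A valid nice tree decomposition for the CSP instance `Q`: every variable is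
in some bag and every constraint scope is contained in some bag. -/
def IsNiceTreeDecompCSP (Q : CSPInstance n) (T : NiceTree n) : Prop :=
  T.valid ∧ (∀ v : Fin n, v ∈ T.verts) ∧
    ∀ C ∈ consList Q, ∃ s : NiceTree n, s.isSubtree T ∧ C.scope ⊆ s.bag

/-- A valid nice tree decomposition of a graph `G`: every vertex is in some bag
and both endpoints of every edge lie in a common bag. -/
def IsNiceTreeDecompGraph (G : SimpleGraph (Fin n)) (T : NiceTree n) : Prop :=
  T.valid ∧ (∀ v : Fin n, v ∈ T.verts) ∧
    ∀ u v : Fin n, G.Adj u v → ∃ s : NiceTree n, s.isSubtree T ∧ u ∈ s.bag ∧ v ∈ s.bag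

/-- The constraint graph of a CSP instance. -/
def constraintGraph (Q : CSPInstance n) : SimpleGraph (Fin n) where
  Adj u v := u ≠ v ∧ ∃ C ∈ consList Q, u ∈ C.scope ∧ v ∈ C.scope
  symm := by
    refine ⟨?_⟩
    rintro u v ⟨hne, C, hC, hu, hv⟩
    exact ⟨hne.symm, C, hC, hv, hu⟩
  loopless := by
    refine ⟨?_⟩
    rintro v ⟨hne, -⟩
    exact hne rfl

-- The LP constraints of `P(Q)` relevant to the subtree `t`: bag equations and
-- consistency equations at introduce and forget nodes of `t`.
def RelCons (Q : CSPInstance n) (f : (Fin n → Option ℝ) → ℝ) : NiceTree n → Prop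
  | .leaf v => ∑ K ∈ configs Q {v}, f K = 1
  | .introduce v t =>
      RelCons Q f t ∧ (∑ K ∈ configs Q (insert v t.bag), f K = 1) ∧
      ∀ K ∈ configs Q t.bag,
        ∑ K' ∈ (configs Q (insert v t.bag)).filter
            (fun K' => restrictCfg K' t.bag = K), f K' = f K
  | .forget v t =>
      RelCons Q f t ∧ (∑ K ∈ configs Q (t.bag.erase v), f K = 1) ∧
      ∀ K ∈ configs Q (t.bag.erase v),
        ∑ K' ∈ (configs Q t.bag).filter
            (fun K' => restrictCfg K' (t.bag.erase v) = K), f K' = f K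
  | .join t₁ t₂ => RelCons Q f t₁ ∧ RelCons Q f t₂

/-- All the constraints of `P(Q)` relevant to the subtree `t`, including the
bounds `0 ≤ f(K) ≤ 1` for relevant configurations. -/
def RelevantLP (Q : CSPInstance n) (t : NiceTree n) (f : (Fin n → Option ℝ) → ℝ) : Prop :=
  RelCons Q f t ∧ ∀ K ∈ t.relConfigs Q, 0 ≤ f K ∧ f K ≤ 1

/-- The polytope `P(Q) ⊆ ℝ^{𝒦_ℬ}` (coordinates outside `𝒦_ℬ` are zero). -/
def Ppoly (Q : CSPInstance n) (T : NiceTree n) : Set ((Fin n → Option ℝ) → ℝ) :=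
  {f | RelevantLP Q T f ∧ ∀ K, K ∉ T.relConfigs Q → f K = 0}

/-- Extended feasible assignments `(z, h)`. -/
def ExtAssignments (Q : CSPInstance n) :
    Set ((Fin n → ℝ) × (Fin Q.soft.length → ℝ)) :=
  {p | Feasible Q p.1 ∧ ∀ i : Fin Q.soft.length,
      ((Q.soft.get i).sat p.1 ∧ p.2 i = 1) ∨ (¬ (Q.soft.get i).sat p.1 ∧ p.2 i = 0)}

/-- `CSP(Q)`: the convex hull of all extended feasible assignments. -/
def CSPpolytope (Q : CSPInstance n) : Set ((Fin n → ℝ) × (Fin Q.soft.length → ℝ)) :=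
  convexHull ℝ (ExtAssignments Q)

/-- `CSP'(Q)`: the convex hull of all feasible assignments. -/
def CSPpolytope' (Q : CSPInstance n) : Set (Fin n → ℝ) :=
  convexHull ℝ {z | Feasible Q z}

/-- The `y`-variables of the basic LP: one for each `v ∈ V` and `i ∈ D_v`. -/
abbrev YType (Q : CSPInstance n) := (v : Fin n) → {i : ℝ // i ∈ Q.dom v} → ℝ

/-- The `g`-variables of the basic LP: one for each constraint `C_U ∈ 𝒞 ∪ ℋ`
and each configuration `K ∈ 𝒦(U)`. -/
abbrev GType (Q : CSPInstance n) :=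
  (c : Fin (consList Q).length) →
    {K : Fin n → Option ℝ // K ∈ configs Q ((consList Q).get c).scope} → ℝ

/-- The basic LP (1)–(3). -/
def BasicLP (Q : CSPInstance n) (p : YType Q × GType Q) : Prop :=
  (∀ v : Fin n, ∑ i ∈ (Q.dom v).attach, p.1 v i = 1) ∧
  (∀ c : Fin (consList Q).length, ∀ v ∈ ((consList Q).get c).scope,
    ∀ (i : ℝ) (hi : i ∈ Q.dom v),
      ∑ K ∈ (configs Q ((consList Q).get c).scope).attach.filter
          (fun K => K.1 v = some i), p.2 c K = p.1 v ⟨i, hi⟩) ∧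
  (∀ v i, 0 ≤ p.1 v i ∧ p.1 v i ≤ 1) ∧ (∀ c K, 0 ≤ p.2 c K ∧ p.2 c K ≤ 1)

/-- Integrality (all coordinates in `{0,1}`) of a `(y, g)` vector. -/
def IntegralYG (Q : CSPInstance n) (p : YType Q × GType Q) : Prop :=
  (∀ v i, p.1 v i = 0 ∨ p.1 v i = 1) ∧ ∀ c K, p.2 c K = 0 ∨ p.2 c K = 1

-- The map sending a (feasible) assignment `z` to the `(y, g)` vector of the basic LP.
open Classical in
noncomputable def exMap (Q : CSPInstance n) (z : Fin n → ℝ) : YType Q × GType Q :=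
  (fun v i => if z v = i.1 then 1 else 0,
   fun c K => if ∀ u ∈ ((consList Q).get c).scope, K.1 u = some (z u) then 1 else 0)

open Finset NiceTree

/-!
Each `I i` is the indicator, on `𝒦(B(b))`, of a single configuration `K₀ i`, and exactly
`M f(K)` indices select a given `K`. By the consistency equation of `f` at the introduce node,
this number is the sum of the integers `M f(K')` over the extensions `K'` of `K` to `B(c)`, so the
indices selecting `K` can be distributed among these extensions with exactly these multiplicities.
`J i` is `I i` overwritten on `𝒦(B(c))` by the indicator of the extension assigned to `i`. Since
`v` occurs in no bag below `c`, every configuration of `ℛ(b)` is undefined at `v`, so `𝒦(B(c))` is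
disjoint from `ℛ(b)` and `J i` still satisfies the constraints relevant to `T(b)`.
-/

theorem Finset.exists_eq_ite_of_sum_eq_one {α R : Type*} [DecidableEq α] [Semiring R]
    [PartialOrder R] [IsOrderedCancelAddMonoid R] [ZeroLEOneClass R] [NeZero (1 : R)]
    {s : Finset α} {f : α → R} (hbin : ∀ a ∈ s, f a = 0 ∨ f a = 1) (hsum : ∑ a ∈ s, f a = 1) :
    ∃ a₀ ∈ s, ∀ a ∈ s, f a = if a = a₀ then 1 else 0 := by
  obtain ⟨a₀, ha₀, hfa₀⟩ := exists_ne_zero_of_sum_ne_zero (hsum.trans_ne one_ne_zero)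
  have h₁ : f a₀ = 1 := (hbin a₀ ha₀).resolve_left hfa₀
  have hrest : ∑ a ∈ s.erase a₀, f a = 0 := by
    have := add_sum_erase s f ha₀
    rw [hsum, h₁] at this
    exact add_eq_left.mp this
  refine ⟨a₀, ha₀, fun a ha => ?_⟩
  split_ifs with h
  · rw [h, h₁]
  · refine (sum_eq_zero_iff_of_nonneg fun a ha => ?_).mp hrest a (mem_erase.mpr ⟨h, ha⟩)
    rcases hbin a (mem_of_mem_erase ha) with h | h <;> simp [h]

theorem Finset.card_filter_sdiff_add_card_filter {α : Type*} [DecidableEq α] {s s₀ : Finset α}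
    (h : s₀ ⊆ s) (P : α → Prop) [DecidablePred P] :
    #{a ∈ s \ s₀ | P a} + #{a ∈ s₀ | P a} = #{a ∈ s | P a} := by
  rw [← card_union_of_disjoint (disjoint_filter_filter sdiff_disjoint), ← filter_union,
    sdiff_union_of_subset h]

theorem Finset.exists_lift_card_filter_eq {α β γ : Type*} [DecidableEq β] [DecidableEq γ]
    [Nonempty β] (t : Finset β) (π : β → γ) (m : β → ℕ) (s : Finset α) (p : α → γ)
    (h : ∀ c, ∑ b ∈ t with π b = c, m b = #{a ∈ s | p a = c}) :
    ∃ g : α → β, (∀ a ∈ s, g a ∈ t ∧ π (g a) = p a) ∧ ∀ b ∈ t, #{a ∈ s | g a = b} = m b := by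
  classical
  induction t using Finset.induction_on generalizing s with
  | empty =>
    have hs : s = ∅ := eq_empty_of_forall_notMem fun a ha => by
      have := h (p a)
      rw [filter_empty, sum_empty, eq_comm, card_eq_zero, filter_eq_empty_iff] at this
      exact this ha rfl
    exact ⟨fun _ => Classical.arbitrary β, by simp [hs], by simp [hs]⟩
  | insert b₀ t hb₀ ih =>
    have hsum : ∀ c, ∑ b ∈ insert b₀ t with π b = c, m b =
        (if π b₀ = c then m b₀ else 0) + ∑ b ∈ t with π b = c, m b := fun c => by
      rw [sum_filter, sum_insert hb₀, ← sum_filter]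
    obtain ⟨s₀, hs₀, hs₀card⟩ := exists_subset_card_eq (s := {a ∈ s | p a = π b₀}) (n := m b₀)
      (by have := h (π b₀); rw [hsum, if_pos rfl] at this; omega)
    have hs₀s : s₀ ⊆ s := hs₀.trans (filter_subset _ _)
    have hrest : ∀ c, ∑ b ∈ t with π b = c, m b = #{a ∈ s \ s₀ | p a = c} := by
      intro c
      have hs₀c : #{a ∈ s₀ | p a = c} = if π b₀ = c then m b₀ else 0 := by
        split_ifs with hc
        · rw [filter_true_of_mem fun a ha => (mem_filter.mp (hs₀ ha)).2.trans hc, hs₀card]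
        · rw [filter_false_of_mem fun a ha => fun hac => hc ((mem_filter.mp (hs₀ ha)).2 ▸ hac),
            card_empty]
      have := h c
      rw [hsum, ← card_filter_sdiff_add_card_filter hs₀s, hs₀c] at this
      omega
    obtain ⟨g, hg, hgcard⟩ := ih _ hrest
    have hgb₀ : ∀ a ∈ s \ s₀, g a ≠ b₀ := fun a ha hab => hb₀ (hab ▸ (hg a ha).1)
    refine ⟨fun a => if a ∈ s₀ then b₀ else g a, fun a ha => ?_, fun b hb => ?_⟩
    · by_cases ha₀ : a ∈ s₀
      · simpa [ha₀] using (mem_filter.mp (hs₀ ha₀)).2.symm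
      · simp only [if_neg ha₀]
        exact (hg a (mem_sdiff.mpr ⟨ha, ha₀⟩)).imp_left (mem_insert_of_mem ·)
    · rcases mem_insert.mp hb with rfl | hb
      · convert hs₀card using 2
        ext a
        by_cases ha₀ : a ∈ s₀
        · simp [ha₀, hs₀s ha₀]
        · simpa [ha₀] using fun ha => hgb₀ a (mem_sdiff.mpr ⟨ha, ha₀⟩)
      · rw [← hgcard b hb]
        congr 1
        ext a
        by_cases ha₀ : a ∈ s₀
        · simpa [ha₀] using fun _ (hab : b₀ = b) => hb₀ (hab ▸ hb)
        · simp [ha₀]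

namespace NiceTree

theorem bag_subset_verts (t : NiceTree n) : t.bag ⊆ t.verts := by
  induction t with
  | leaf v => exact subset_rfl
  | introduce v t ih => exact insert_subset_insert v ih
  | forget v t ih => exact (erase_subset _ _).trans ih
  | join t₁ t₂ ih₁ ih₂ => exact ih₁.trans subset_union_left

theorem valid_of_isSubtree {s t : NiceTree n} (hs : s.isSubtree t) (ht : t.valid) :
    s.valid := by
  induction t with
  | leaf v => rwa [hs]
  | introduce v t ih => rcases hs with rfl | h; exacts [ht, ih h ht.2]
  | forget v t ih => rcases hs with rfl | h; exacts [ht, ih h ht.2]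
  | join t₁ t₂ ih₁ ih₂ => rcases hs with rfl | h | h; exacts [ht, ih₁ h ht.2.2.1, ih₂ h ht.2.2.2]

variable {Q : CSPInstance n}

theorem relConfigs_subset_of_isSubtree {s t : NiceTree n} (hs : s.isSubtree t) :
    s.relConfigs Q ⊆ t.relConfigs Q := by
  induction t with
  | leaf v => rw [hs]
  | introduce v t ih =>
    rcases hs with rfl | h
    exacts [subset_rfl, (ih h).trans subset_union_right]
  | forget v t ih =>
    rcases hs with rfl | h
    exacts [subset_rfl, (ih h).trans subset_union_right]
  | join t₁ t₂ ih₁ ih₂ =>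
    rcases hs with rfl | h | h
    exacts [subset_rfl, (ih₁ h).trans subset_union_left, (ih₂ h).trans subset_union_right]

theorem configs_bag_subset_relConfigs (t : NiceTree n) : configs Q t.bag ⊆ t.relConfigs Q := by
  induction t with
  | leaf v => exact subset_rfl
  | introduce v t ih => exact subset_union_left
  | forget v t ih => exact subset_union_left
  | join t₁ t₂ ih₁ ih₂ => exact ih₁.trans subset_union_left

end NiceTree

section Configs

variable {Q : CSPInstance n}

theorem apply_mem_of_mem_configs {W : Finset (Fin n)} {K : Fin n → Option ℝ}
    (hK : K ∈ configs Q W) (v : Fin n) :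
    K v ∈ if v ∈ W then (Q.dom v).image some else ({none} : Finset (Option ℝ)) := by
  classical
  rw [configs, mem_filter, Fintype.mem_piFinset] at hK
  convert hK.1 v

theorem apply_eq_none_of_mem_configs {W : Finset (Fin n)} {K : Fin n → Option ℝ}
    (hK : K ∈ configs Q W) {v : Fin n} (hv : v ∉ W) : K v = none := by
  simpa [hv] using apply_mem_of_mem_configs hK v

theorem apply_ne_none_of_mem_configs {W : Finset (Fin n)} {K : Fin n → Option ℝ}
    (hK : K ∈ configs Q W) {v : Fin n} (hv : v ∈ W) : K v ≠ none := by
  obtain ⟨r, -, hr⟩ := mem_image.mp (by simpa [hv] using apply_mem_of_mem_configs hK v)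
  simp [← hr]

theorem restrictCfg_mem_configs {W W' : Finset (Fin n)} (hWW' : W ⊆ W')
    {K : Fin n → Option ℝ} (hK : K ∈ configs Q W') : restrictCfg K W ∈ configs Q W := by
  classical
  rw [configs, mem_filter, Fintype.mem_piFinset] at hK ⊢
  refine ⟨fun u => ?_, fun C hC hCW =>
    C.sat_congr _ _ (fun u hu => ?_) (hK.2 C hC (hCW.trans hWW'))⟩
  · by_cases hu : u ∈ W
    · simpa [restrictCfg, hu, hWW' hu] using hK.1 u
    · simp [restrictCfg, hu]
  · simp [restrictCfg, hCW hu]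

theorem NiceTree.apply_eq_none_of_mem_relConfigs {t : NiceTree n} {K : Fin n → Option ℝ}
    (hK : K ∈ t.relConfigs Q) {v : Fin n} (hv : v ∉ t.verts) : K v = none := by
  induction t with
  | leaf w => exact apply_eq_none_of_mem_configs hK hv
  | introduce w t ih =>
    rcases mem_union.mp hK with hK | hK
    · exact apply_eq_none_of_mem_configs hK fun h =>
        hv (insert_subset_insert w (bag_subset_verts t) h)
    · exact ih hK fun h => hv (mem_insert_of_mem h)
  | forget w t ih =>
    rcases mem_union.mp hK with hK | hK
    · exact apply_eq_none_of_mem_configs hK fun h => hv (bag_subset_verts t (mem_of_mem_erase h))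
    · exact ih hK hv
  | join t₁ t₂ ih₁ ih₂ =>
    rcases mem_union.mp hK with hK | hK
    · exact ih₁ hK fun h => hv (mem_union_left _ h)
    · exact ih₂ hK fun h => hv (mem_union_right _ h)

theorem NiceTree.disjoint_relConfigs_configs_insert {t : NiceTree n} {v : Fin n}
    (hv : v ∉ t.verts) :
    Disjoint (t.relConfigs Q) (configs Q (insert v t.bag)) :=
  disjoint_left.mpr fun _ hK hK' =>
    apply_ne_none_of_mem_configs hK' (mem_insert_self v _) (apply_eq_none_of_mem_relConfigs hK hv)

variable {f g : (Fin n → Option ℝ) → ℝ}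

theorem RelCons.sum_configs_bag {t : NiceTree n} (h : RelCons Q f t) :
    ∑ K ∈ configs Q t.bag, f K = 1 := by
  induction t with
  | leaf v => exact h
  | introduce v t ih => exact h.2.1
  | forget v t ih => exact h.2.1
  | join t₁ t₂ ih₁ ih₂ => exact ih₁ h.1

theorem RelCons.of_isSubtree {s t : NiceTree n} (hs : s.isSubtree t) (ht : RelCons Q f t) :
    RelCons Q f s := by
  induction t with
  | leaf v => rwa [hs]
  | introduce v t ih => rcases hs with rfl | h; exacts [ht, ih h ht.1]
  | forget v t ih => rcases hs with rfl | h; exacts [ht, ih h ht.1]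
  | join t₁ t₂ ih₁ ih₂ => rcases hs with rfl | h | h; exacts [ht, ih₁ h ht.1, ih₂ h ht.2]

theorem RelCons.congr {t : NiceTree n} (hf : RelCons Q f t)
    (hfg : ∀ K ∈ t.relConfigs Q, f K = g K) : RelCons Q g t := by
  induction t with
  | leaf v => exact (sum_congr rfl fun K hK => (hfg K hK).symm).trans hf
  | introduce v t ih =>
    have h₁ : ∀ K ∈ configs Q (insert v t.bag), f K = g K := fun K hK => hfg K (mem_union_left _ hK)
    have h₂ : ∀ K ∈ t.relConfigs Q, f K = g K := fun K hK => hfg K (mem_union_right _ hK)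
    refine ⟨ih hf.1 h₂, (sum_congr rfl fun K hK => (h₁ K hK).symm).trans hf.2.1, fun K hK => ?_⟩
    rw [← h₂ K (configs_bag_subset_relConfigs t hK), ← hf.2.2 K hK]
    exact sum_congr rfl fun K' hK' => (h₁ K' (mem_of_mem_filter K' hK')).symm
  | forget v t ih =>
    have h₁ : ∀ K ∈ configs Q (t.bag.erase v), f K = g K := fun K hK => hfg K (mem_union_left _ hK)
    have h₂ : ∀ K ∈ t.relConfigs Q, f K = g K := fun K hK => hfg K (mem_union_right _ hK)
    refine ⟨ih hf.1 h₂, (sum_congr rfl fun K hK => (h₁ K hK).symm).trans hf.2.1, fun K hK => ?_⟩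
    rw [← h₁ K hK, ← hf.2.2 K hK]
    exact sum_congr rfl fun K' hK' =>
      (h₂ K' (configs_bag_subset_relConfigs t (mem_of_mem_filter K' hK'))).symm
  | join t₁ t₂ ih₁ ih₂ =>
    exact ⟨ih₁ hf.1 fun K hK => hfg K (mem_union_left _ hK),
      ih₂ hf.2 fun K hK => hfg K (mem_union_right _ hK)⟩

theorem exists_extensions_card_eq {ι : Type*} [Fintype ι] {v : Fin n} {t : NiceTree n} {c : ℝ}
    (hf : ∀ K ∈ configs Q t.bag,
      ∑ K' ∈ configs Q (insert v t.bag) with restrictCfg K' t.bag = K, f K' = f K)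
    (hfint : ∀ K ∈ configs Q (insert v t.bag), ∃ m : ℕ, (m : ℝ) = c * f K)
    {K₀ : ι → Fin n → Option ℝ} (hK₀ : ∀ i, K₀ i ∈ configs Q t.bag)
    (hK₀card : ∀ K ∈ configs Q t.bag, (#{i | K₀ i = K} : ℝ) = c * f K) :
    ∃ K₁ : ι → Fin n → Option ℝ,
      (∀ i, K₁ i ∈ configs Q (insert v t.bag) ∧ restrictCfg (K₁ i) t.bag = K₀ i) ∧
      ∀ K ∈ configs Q (insert v t.bag), (#{i | K₁ i = K} : ℝ) = c * f K := by
  choose! m hm using hfint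
  have hfibre : ∀ K, ∑ K' ∈ configs Q (insert v t.bag) with restrictCfg K' t.bag = K, m K' =
      #{i | K₀ i = K} := by
    intro K
    by_cases hK : K ∈ configs Q t.bag
    · have := hK₀card K hK
      rw [← hf K hK, mul_sum, ← sum_congr rfl fun K' hK' => hm K' (mem_of_mem_filter K' hK')]
        at this
      exact_mod_cast this.symm
    · have hnone : ∀ K' ∈ configs Q (insert v t.bag), restrictCfg K' t.bag ≠ K := fun K' hK' h =>
        hK (h ▸ restrictCfg_mem_configs (subset_insert v t.bag) hK')
      rw [filter_false_of_mem hnone, filter_false_of_mem fun i _ (hi : K₀ i = K) => hK (hi ▸ hK₀ i),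
        sum_empty, card_empty]
  obtain ⟨K₁, hK₁, hK₁card⟩ := exists_lift_card_filter_eq _ _ m univ K₀ hfibre
  refine ⟨K₁, fun i => hK₁ i (mem_univ i), fun K hK => ?_⟩
  rw [hK₁card K hK, hm K hK]

end Configs

noncomputable def extendAtIntroduce (Q : CSPInstance n) (v : Fin n) (t : NiceTree n)
    (I : (Fin n → Option ℝ) → ℝ) (K₁ : Fin n → Option ℝ) : (Fin n → Option ℝ) → ℝ :=
  fun K => if K ∈ configs Q (insert v t.bag) then if K = K₁ then 1 else 0 else I K

section extendAtIntroduce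

variable {Q : CSPInstance n} {v : Fin n} {t : NiceTree n} {I : (Fin n → Option ℝ) → ℝ}
  {K₁ K : Fin n → Option ℝ}

theorem extendAtIntroduce_of_mem_relConfigs (hv : v ∉ t.verts) (hK : K ∈ t.relConfigs Q) :
    extendAtIntroduce Q v t I K₁ K = I K :=
  if_neg (disjoint_left.mp (disjoint_relConfigs_configs_insert hv) hK)

theorem extendAtIntroduce_of_mem_configs (hK : K ∈ configs Q (insert v t.bag)) :
    extendAtIntroduce Q v t I K₁ K = if K = K₁ then 1 else 0 :=
  if_pos hK

theorem extendAtIntroduce_eq_zero_or_one (hI : ∀ K, I K = 0 ∨ I K = 1) (K : Fin n → Option ℝ) :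
    extendAtIntroduce Q v t I K₁ K = 0 ∨ extendAtIntroduce Q v t I K₁ K = 1 := by
  unfold extendAtIntroduce
  split_ifs
  exacts [Or.inr rfl, Or.inl rfl, hI K]

theorem relevantLP_extendAtIntroduce (hv : v ∉ t.verts)
    (hI : RelevantLP Q t I) (hK₁ : K₁ ∈ configs Q (insert v t.bag))
    (hIbag : ∀ K ∈ configs Q t.bag, I K = if K = restrictCfg K₁ t.bag then 1 else 0) :
    RelevantLP Q (.introduce v t) (extendAtIntroduce Q v t I K₁) := by
  have hagree : ∀ K ∈ t.relConfigs Q, I K = extendAtIntroduce Q v t I K₁ K :=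
    fun K hK => (extendAtIntroduce_of_mem_relConfigs hv hK).symm
  refine ⟨⟨hI.1.congr hagree, ?_, fun K hK => ?_⟩, fun K hK => ?_⟩
  · rw [sum_congr rfl fun K hK => extendAtIntroduce_of_mem_configs hK, sum_ite_eq', if_pos hK₁]
  · rw [sum_congr rfl fun K' hK' => extendAtIntroduce_of_mem_configs (mem_of_mem_filter K' hK'),
      sum_ite_eq', ← hagree K (configs_bag_subset_relConfigs t hK), hIbag K hK]
    simp only [mem_filter, hK₁, true_and, eq_comm]
  · by_cases hK' : K ∈ configs Q (insert v t.bag)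
    · rw [extendAtIntroduce_of_mem_configs hK']
      split_ifs <;> norm_num
    · rw [← hagree K ((mem_union.mp hK).resolve_left hK')]
      exact hI.2 K ((mem_union.mp hK).resolve_left hK')

theorem sum_extendAtIntroduce {ι : Type*} [Fintype ι]
    {I : ι → (Fin n → Option ℝ) → ℝ} {K₁ : ι → Fin n → Option ℝ}
    (hK : K ∈ configs Q (insert v t.bag)) :
    ∑ i, extendAtIntroduce Q v t (I i) (K₁ i) K = #{i | K₁ i = K} := by
  rw [sum_congr rfl fun i _ => extendAtIntroduce_of_mem_configs hK, ← sum_boole]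
  simp only [eq_comm]

end extendAtIntroduce

theorem introduce_step_general (n : ℕ) (Q : CSPInstance n) (T : NiceTree n)
    (hT : IsNiceTreeDecompCSP Q T) (v : Fin n) (b : NiceTree n)
    (hsub : (NiceTree.introduce v b).isSubtree T)
    (f : (Fin n → Option ℝ) → ℝ) (hf : f ∈ Ppoly Q T)
    (M : ℕ) (hM : 0 < M)
    (hint : ∀ K ∈ (NiceTree.introduce v b).relConfigs Q, ∃ k : ℤ, (M : ℝ) * f K = (k : ℝ))
    (I : Fin M → ((Fin n → Option ℝ) → ℝ))
    (hIbin : ∀ i K, I i K = 0 ∨ I i K = 1)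
    (hIrel : ∀ i, RelevantLP Q b (I i))
    (hIavg : ∀ K ∈ b.relConfigs Q, f K = (1 / (M : ℝ)) * ∑ i, I i K) :
    ∃ J : Fin M → ((Fin n → Option ℝ) → ℝ),
      (∀ i K, J i K = 0 ∨ J i K = 1) ∧
      (∀ i, RelevantLP Q (NiceTree.introduce v b) (J i)) ∧
      ∀ K ∈ (NiceTree.introduce v b).relConfigs Q,
        f K = (1 / (M : ℝ)) * ∑ i, J i K := by
  obtain ⟨⟨hfT, hf01⟩, -⟩ := hf
  have hvb : v ∉ b.verts := (valid_of_isSubtree hsub hT.1).1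
  choose K₀ hK₀ hIK₀ using fun i =>
    exists_eq_ite_of_sum_eq_one (fun K _ => hIbin i K) (hIrel i).1.sum_configs_bag
  have hK₀card : ∀ K ∈ configs Q b.bag, (#{i | K₀ i = K} : ℝ) = M * f K := by
    intro K hK
    rw [hIavg K (configs_bag_subset_relConfigs b hK), ← sum_boole,
      sum_congr rfl fun i _ => hIK₀ i K hK]
    field_simp
    simp only [eq_comm]
  have hfint : ∀ K ∈ configs Q (insert v b.bag), ∃ m : ℕ, (m : ℝ) = M * f K := by
    intro K hK
    have hKc : K ∈ (NiceTree.introduce v b).relConfigs Q := mem_union_left _ hK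
    obtain ⟨k, hk⟩ := hint K hKc
    have hk0 : (0 : ℝ) ≤ k :=
      hk ▸ mul_nonneg M.cast_nonneg (hf01 K (relConfigs_subset_of_isSubtree hsub hKc)).1
    exact ⟨k.toNat, by rw [hk]; exact_mod_cast Int.toNat_of_nonneg (by exact_mod_cast hk0)⟩
  obtain ⟨K₁, hK₁, hK₁card⟩ :=
    exists_extensions_card_eq (hfT.of_isSubtree hsub).2.2 hfint hK₀ hK₀card
  refine ⟨fun i => extendAtIntroduce Q v b (I i) (K₁ i),
    fun i => extendAtIntroduce_eq_zero_or_one (hIbin i),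
    fun i => relevantLP_extendAtIntroduce hvb (hIrel i) (hK₁ i).1 ((hK₁ i).2 ▸ hIK₀ i),
    fun K hK => ?_⟩
  rcases mem_union.mp hK with hK | hK
  · rw [sum_extendAtIntroduce hK, hK₁card K hK]
    field_simp
  · simp only [hIavg K hK, extendAtIntroduce_of_mem_relConfigs hvb hK]

/-- Inductive step at an introduce node. -/
theorem introduce_step (n : ℕ) (Q : CSPInstance n) (T : NiceTree n)
    (hT : IsNiceTreeDecompCSP Q T) (v : Fin n) (b : NiceTree n)
    (hv : v ∉ b.bag)
    (hsub : (NiceTree.introduce v b).isSubtree T)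
    (f : (Fin n → Option ℝ) → ℝ) (hf : f ∈ Ppoly Q T)
    (M : ℕ) (hM : 0 < M)
    (hint : ∀ K ∈ (NiceTree.introduce v b).relConfigs Q, ∃ k : ℤ, (M : ℝ) * f K = (k : ℝ))
    (I : Fin M → ((Fin n → Option ℝ) → ℝ))
    (hIbin : ∀ i K, I i K = 0 ∨ I i K = 1)
    (hIrel : ∀ i, RelevantLP Q b (I i))
    (hIavg : ∀ K ∈ b.relConfigs Q, f K = (1 / (M : ℝ)) * ∑ i, I i K) :
    ∃ J : Fin M → ((Fin n → Option ℝ) → ℝ),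
      (∀ i K, J i K = 0 ∨ J i K = 1) ∧
      (∀ i, RelevantLP Q (NiceTree.introduce v b) (J i)) ∧
      ∀ K ∈ (NiceTree.introduce v b).relConfigs Q,
        f K = (1 / (M : ℝ)) * ∑ i, J i K :=
  introduce_step_general n Q T hT v b hsub f hf M hM hint I hIbin hIrel hIavg
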